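/- Let L satisfy (T1)-(T4) with root system R. Then for every non-isotropic α ∈ R and every β ∈ R, the Cartan integer 2(β,α)/(α,α) is an integer. -/

import Mathlib

open scoped Classical

namespace Gen

variable (F L : Type*) [Field F] [CharZero F] [LieRing L] [LieAlgebra F L]

/-- The weight space of a linear functional `α` on a subalgebra `H`. -/
def wt (H : LieSubalgebra F L) (α : Module.Dual F H) : Submodule F L where
  carrier := {x : L | ∀ h : H, ⁅(h : L), x⁆ = α h • x}
  add_mem' := by
    intro a b ha hb h
    rw [lie_add, ha h, hb h, smul_add]
  zero_mem' := by intro h; simp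
  smul_mem' := by
    intro c x hx h
    rw [lie_smul, hx h, smul_comm]

/-- Data for axioms (T1) and (T2): a non-degenerate symmetric invariant bilinear form,
a finite dimensional split toral subalgebra `H` on which the form is non-degenerate,
together with the representatives `t_α ∈ H` of linear functionals on `H`. -/
structure TData where
  B : L →ₗ[F] L →ₗ[F] F
  bsymm : ∀ x y, B x y = B y x
  binv : ∀ x y z, B ⁅x, y⁆ z = B x ⁅y, z⁆
  bnondeg : ∀ x, (∀ y, B x y = 0) → x = 0
  H : LieSubalgebra F L
  hne : H ≠ ⊥
  hfin : FiniteDimensional F H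
  hnondeg : ∀ h : H, (∀ h' : H, B h h' = 0) → h = 0
  decomp : DirectSum.IsInternal (wt F L H)
  t : Module.Dual F H → H
  tspec : ∀ (α : Module.Dual F H) (h : H), B (t α) h = α h

variable {F L}

namespace TData

variable (T : TData F L)

/-- The form transferred to the dual of `H`: `(α, β) = (t_α, t_β)`. -/
def pr (α β : Module.Dual F T.H) : F := T.B (T.t α) (T.t β)

/-- The root system `R = {α : L_α ≠ 0}`. -/
def R : Set (Module.Dual F T.H) := {α | wt F L T.H α ≠ ⊥}

/-- Non-isotropic roots. -/
def Rx : Set (Module.Dual F T.H) := {α | α ∈ T.R ∧ T.pr α α ≠ 0}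

/-- Isotropic roots. -/
def R0 : Set (Module.Dual F T.H) := {α | α ∈ T.R ∧ T.pr α α = 0}

/-- The core: the subalgebra generated by the non-isotropic root spaces. -/
def core : LieSubalgebra F L :=
  LieSubalgebra.lieSpan F L (⋃ α ∈ T.Rx, (wt F L T.H α : Set L))

end TData

variable (F L)

/-- A Lie algebra in the class 𝒯: axioms (T1)–(T6). -/
structure TAlg extends TData F L where
  t3a : ∀ δ ∈ toTData.R0, ∃ x ∈ wt F L toTData.H δ, ∃ y ∈ wt F L toTData.H (-δ),
          ⁅x, y⁆ = (toTData.t δ : L)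
  t3b : ∀ α ∈ toTData.Rx, ∀ x ∈ wt F L toTData.H α, x ≠ 0 →
          ∃ y ∈ wt F L toTData.H (-α), ⁅x, y⁆ = (toTData.t α : L)
  t4 : ∀ α ∈ toTData.Rx, ∀ x ∈ wt F L toTData.H α, ∀ y : L,
          ∃ n : ℕ, ((LieAlgebra.ad F L x) ^ n) y = 0
  t5a : ∀ S1 S2 : Set (Module.Dual F toTData.H), S1.Nonempty → S2.Nonempty →
          S1 ∪ S2 = toTData.Rx → Disjoint S1 S2 →
          ∃ a ∈ S1, ∃ b ∈ S2, toTData.pr a b ≠ 0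
  t5b : ∀ δ ∈ toTData.R0, ∃ α ∈ toTData.Rx, α + δ ∈ toTData.R
  t6free : Module.Free ℤ (AddSubgroup.closure toTData.R0)
  t6fin : Module.Finite ℤ (AddSubgroup.closure toTData.R0)

end Gen

/-!
Every nonzero `x ∈ L_α` with `α` non-isotropic spans, together with a partner `y ∈ L_{-α}`
from (T3), an `sl₂`-triple `(e, h, f) = (x, (2/(α,α)) t_α, (2/(α,α)) y)`, and `h` acts on `L_β`
by the scalar `2(β,α)/(α,α)`. Local nilpotency (T4) of `ad e` turns a nonzero `v ∈ L_β` into a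
primitive vector `(ad e)^m v` of weight `2(β,α)/(α,α) + 2m`; local nilpotency of `ad f` then
forces this weight to be a natural number, exactly as in a finite-dimensional `sl₂`-module.
-/

namespace IsSl2Triple

open LieModule

section Construction

variable {K L : Type*} [Field K] [NeZero (2 : K)] [LieRing L] [LieAlgebra K L]

lemma of_lie_eq_smul {t x y : L} {c : K} (hc : c ≠ 0) (ht : t ≠ 0)
    (htx : ⁅t, x⁆ = c • x) (hty : ⁅t, y⁆ = -(c • y)) (hxy : ⁅x, y⁆ = t) :
    IsSl2Triple ((2 / c) • t) x ((2 / c) • y) where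
  h_ne_zero := smul_ne_zero (div_ne_zero two_ne_zero hc) ht
  lie_e_f := by rw [lie_smul, hxy]
  lie_h_e_nsmul := by
    rw [smul_lie, htx, smul_smul, div_mul_cancel₀ 2 hc, ofNat_smul_eq_nsmul]
  lie_h_f_nsmul := by
    rw [smul_lie, lie_smul, hty, smul_neg, smul_smul (2 / c) c, div_mul_cancel₀ 2 hc,
      ofNat_smul_eq_nsmul, smul_neg, smul_comm]

end Construction

variable {R L M : Type*} [CommRing R] [LieRing L] [LieAlgebra R L]
  [AddCommGroup M] [Module R M] [LieRingModule L M] [LieModule R L M]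
  {h e f : L} {m : M} {μ : R}

lemma exists_hasPrimitiveVectorWith_of_pow_toEnd_e_eq_zero (t : IsSl2Triple h e f)
    (hm : m ≠ 0) (hhm : ⁅h, m⁆ = μ • m) {n : ℕ} (hn : (toEnd R L M e ^ n) m = 0) :
    ∃ k : ℕ, t.HasPrimitiveVectorWith ((toEnd R L M e ^ k) m) (μ + 2 * k) := by
  obtain ⟨k, hk, hk_succ⟩ := Nat.exists_not_and_succ_of_not_zero_of_exists
    (p := fun k => (toEnd R L M e ^ k) m = 0) (by simpa using hm) ⟨n, hn⟩
  exact ⟨k, hk, t.lie_h_pow_toEnd_e hhm k, by rwa [lie_e_pow_toEnd_e]⟩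

variable [IsDomain R] [CharZero R] [Module.IsTorsionFree R M]

lemma HasPrimitiveVectorWith.exists_nat_of_pow_toEnd_f_eq_zero {t : IsSl2Triple h e f}
    (P : t.HasPrimitiveVectorWith m μ) {n : ℕ} (hn : (toEnd R L M f ^ n) m = 0) :
    ∃ k : ℕ, μ = k := by
  obtain ⟨k, hk, hk_succ⟩ := Nat.exists_not_and_succ_of_not_zero_of_exists
    (p := fun k => (toEnd R L M f ^ k) m = 0) (by simpa using P.ne_zero) ⟨n, hn⟩
  refine ⟨k, ?_⟩
  have h_lie := P.lie_e_pow_succ_toEnd_f k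
  rw [hk_succ, lie_zero, eq_comm, smul_eq_zero_iff_left hk, mul_eq_zero, sub_eq_zero] at h_lie
  exact h_lie.resolve_left (Nat.cast_add_one_ne_zero k)

lemma exists_int_of_lie_h_eq_smul (t : IsSl2Triple h e f) (hm : m ≠ 0) (hhm : ⁅h, m⁆ = μ • m)
    (he : ∃ n : ℕ, (toEnd R L M e ^ n) m = 0) (hf : ∀ m' : M, ∃ n : ℕ, (toEnd R L M f ^ n) m' = 0) :
    ∃ z : ℤ, μ = z := by
  obtain ⟨n, hn⟩ := he
  obtain ⟨k, P⟩ := t.exists_hasPrimitiveVectorWith_of_pow_toEnd_e_eq_zero hm hhm hn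
  obtain ⟨l, hl⟩ := P.exists_nat_of_pow_toEnd_f_eq_zero (hf _).choose_spec
  exact ⟨l - 2 * k, by push_cast; linear_combination hl⟩

end IsSl2Triple

namespace Gen.TData

variable {F L : Type*} [Field F] [LieRing L] [LieAlgebra F L] (T : TData F L)

lemma apply_t (β α : Module.Dual F T.H) : β (T.t α) = T.pr β α :=
  (T.tspec β (T.t α)).symm

lemma pr_neg_left (β α : Module.Dual F T.H) : T.pr (-β) α = -T.pr β α := by
  rw [← apply_t, ← apply_t, LinearMap.neg_apply]

lemma t_neg (α : Module.Dual F T.H) : T.t (-α) = -T.t α := by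
  rw [eq_neg_iff_add_eq_zero]
  refine T.hnondeg _ fun h' => ?_
  change T.B ((T.t (-α) : L) + T.t α) h' = 0
  rw [map_add, LinearMap.add_apply, T.tspec, T.tspec, LinearMap.neg_apply, neg_add_cancel]

lemma pr_neg_neg (α : Module.Dual F T.H) : T.pr (-α) (-α) = T.pr α α := by
  rw [pr_neg_left, ← apply_t, t_neg, map_neg, apply_t, neg_neg]

lemma t_ne_zero {α : Module.Dual F T.H} (hα : T.pr α α ≠ 0) : (T.t α : L) ≠ 0 := by
  intro h0
  apply hα
  rw [pr, h0, map_zero]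

lemma lie_t_of_mem_wt {β : Module.Dual F T.H} {x : L} (hx : x ∈ wt F L T.H β)
    (α : Module.Dual F T.H) : ⁅(T.t α : L), x⁆ = T.pr β α • x := by
  rw [hx, apply_t]

lemma neg_mem_Rx {α : Module.Dual F T.H} (hα : α ∈ T.Rx) {y : L}
    (hy : y ∈ wt F L T.H (-α)) (hy0 : y ≠ 0) : -α ∈ T.Rx :=
  ⟨(Submodule.ne_bot_iff _).mpr ⟨y, hy, hy0⟩, by rw [pr_neg_neg]; exact hα.2⟩

end Gen.TData

theorem cartan_integer_general
    (F L : Type*) [Field F] [CharZero F] [LieRing L] [LieAlgebra F L]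
    (T : Gen.TData F L)
    (t3b : ∀ α ∈ T.Rx, ∀ x ∈ Gen.wt F L T.H α, x ≠ 0 →
        ∃ y ∈ Gen.wt F L T.H (-α), ⁅x, y⁆ = (T.t α : L))
    (t4 : ∀ α ∈ T.Rx, ∀ x ∈ Gen.wt F L T.H α, ∀ y : L,
        ∃ n : ℕ, ((LieAlgebra.ad F L x) ^ n) y = 0)
    (α : Module.Dual F T.H) (hα : α ∈ T.Rx) (β : Module.Dual F T.H) (hβ : β ∈ T.R) :
    ∃ n : ℤ, 2 * T.pr β α = (n : F) * T.pr α α := by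
  obtain ⟨hαR, hc⟩ := id hα
  obtain ⟨x, hx, hx0⟩ := (Submodule.ne_bot_iff _).mp hαR
  obtain ⟨y, hy, hxy⟩ := t3b α hα x hx hx0
  have ht0 : (T.t α : L) ≠ 0 := T.t_ne_zero hc
  have hy0 : y ≠ 0 := by rintro rfl; exact ht0 (by simpa using hxy.symm)
  have hsl2 := IsSl2Triple.of_lie_eq_smul hc ht0 (T.lie_t_of_mem_wt hx α)
    (by rw [T.lie_t_of_mem_wt hy, T.pr_neg_left, neg_smul]) hxy
  obtain ⟨v, hv, hv0⟩ := (Submodule.ne_bot_iff _).mp hβ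
  have hhv : ⁅(2 / T.pr α α) • (T.t α : L), v⁆ = (2 / T.pr α α * T.pr β α) • v := by
    rw [smul_lie, T.lie_t_of_mem_wt hv, smul_smul]
  obtain ⟨z, hz⟩ := hsl2.exists_int_of_lie_h_eq_smul hv0 hhv (t4 α hα x hx v)
    (t4 (-α) (T.neg_mem_Rx hα hy hy0) _ (Submodule.smul_mem _ _ hy))
  refine ⟨z, ?_⟩
  rw [← hz]
  field_simp

/-- Under axioms (T1)–(T4), for non-isotropic `α ∈ R` and any `β ∈ R`,
the Cartan integer `2(β,α)/(α,α)` is an integer. -/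
theorem cartan_integer
    (F L : Type*) [Field F] [CharZero F] [LieRing L] [LieAlgebra F L]
    (T : Gen.TData F L)
    (t3a : ∀ δ ∈ T.R0, ∃ x ∈ Gen.wt F L T.H δ, ∃ y ∈ Gen.wt F L T.H (-δ),
        ⁅x, y⁆ = (T.t δ : L))
    (t3b : ∀ α ∈ T.Rx, ∀ x ∈ Gen.wt F L T.H α, x ≠ 0 →
        ∃ y ∈ Gen.wt F L T.H (-α), ⁅x, y⁆ = (T.t α : L))
    (t4 : ∀ α ∈ T.Rx, ∀ x ∈ Gen.wt F L T.H α, ∀ y : L,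
        ∃ n : ℕ, ((LieAlgebra.ad F L x) ^ n) y = 0)
    (α : Module.Dual F T.H) (hα : α ∈ T.Rx) (β : Module.Dual F T.H) (hβ : β ∈ T.R) :
    ∃ n : ℤ, 2 * T.pr β α = (n : F) * T.pr α α :=
  cartan_integer_general F L T t3b t4 α hα β hβ
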